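/- Let r ≥ 1, let ζ ∈ ℂ be a primitive r-th root of unity (ζ^r = 1 and ζ^k ≠ 1 for 1 ≤ k < r), and let A and B be invertible r × r complex matrices satisfying A·B = ζ·(B·A). Then the pair (A, B) acts irreducibly on ℂ^r: every complex linear subspace W ⊆ ℂ^r with A·W ⊆ W and B·W ⊆ W is either the zero subspace or all of ℂ^r. -/

import Mathlib

/-!
Since `ℂ` is algebraically closed, the nonzero invariant subspace `W` contains an eigenvector `x`
of `A`, with eigenvalue `μ ≠ 0` as `A` is invertible. The relation `A B = ζ B A` makes `Bʲ x` an
eigenvector of `A` with eigenvalue `ζʲ μ`, and it is nonzero as `B` is invertible. For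
`j < r` these eigenvalues are distinct because `ζ` is primitive, so the `r` vectors `Bʲ x` of `W`
are linearly independent and span `ℂ^r`.
-/

open Matrix

namespace Module.End

variable {K V : Type*} [Field K] [AddCommGroup V] [Module K V]

theorem apply_mem_eigenspace_of_mul_eq_smul_mul {f g : End K V} {ζ μ : K}
    (hfg : f * g = ζ • (g * f)) {x : V} (hx : x ∈ f.eigenspace μ) :
    g x ∈ f.eigenspace (ζ * μ) := by
  rw [mem_eigenspace_iff] at hx ⊢
  calc f (g x) = (f * g) x := rfl
    _ = ζ • g (f x) := by rw [hfg]; rfl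
    _ = (ζ * μ) • g x := by rw [hx, map_smul, smul_smul]

theorem pow_apply_mem_eigenspace_of_mul_eq_smul_mul {f g : End K V} {ζ μ : K}
    (hfg : f * g = ζ • (g * f)) {x : V} (hx : x ∈ f.eigenspace μ) (j : ℕ) :
    (g ^ j) x ∈ f.eigenspace (ζ ^ j * μ) := by
  induction j with
  | zero => simpa using hx
  | succ j ih =>
    rw [pow_succ' g, mul_apply, pow_succ' ζ, mul_assoc]
    exact apply_mem_eigenspace_of_mul_eq_smul_mul hfg ih

theorem HasEigenvector.eigenvalue_ne_zero_of_injective {f : End K V} {μ : K} {x : V}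
    (hx : f.HasEigenvector μ x) (hf : Function.Injective f) : μ ≠ 0 := by
  rintro rfl
  exact hx.2 (hf (by rw [hx.apply_eq_smul, zero_smul, map_zero]))

theorem linearIndependent_pow_apply_of_mul_eq_smul_mul {f g : End K V} {ζ μ : K} {r : ℕ}
    (hζ : IsPrimitiveRoot ζ r) (hfg : f * g = ζ • (g * f)) (hg : Function.Injective g) {x : V}
    (hx : f.HasEigenvector μ x) (hμ : μ ≠ 0) :
    LinearIndependent K (fun j : Fin r ↦ (g ^ (j : ℕ)) x) := by
  refine f.eigenvectors_linearIndependent' (fun j : Fin r ↦ ζ ^ (j : ℕ) * μ) ?_ _ fun j ↦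
    ⟨pow_apply_mem_eigenspace_of_mul_eq_smul_mul hfg hx.1 j, ?_⟩
  · intro i j hij
    exact Fin.ext (hζ.pow_inj i.2 j.2 (mul_right_cancel₀ hμ hij))
  · have hgj : Function.Injective (g ^ (j : ℕ)) := by
      rw [coe_pow]
      exact hg.iterate j
    exact (map_ne_zero_iff _ hgj).mpr hx.2

theorem exists_hasEigenvector_mem_of_mapsTo [IsAlgClosed K] [FiniteDimensional K V]
    {f : End K V} {W : Submodule K V} (hW : W ≠ ⊥) (hfW : ∀ w ∈ W, f w ∈ W) :
    ∃ μ x, x ∈ W ∧ f.HasEigenvector μ x := by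
  have : Nontrivial W := Submodule.nontrivial_iff_ne_bot.mpr hW
  obtain ⟨μ, hμ⟩ := exists_eigenvalue (f.restrict hfW)
  obtain ⟨x, hx⟩ := hμ.exists_hasEigenvector
  refine ⟨μ, x, x.2, ?_, ?_⟩
  · rw [mem_eigenspace_iff]
    simpa using congrArg Subtype.val hx.apply_eq_smul
  · exact fun h ↦ hx.2 (Subtype.ext h)

theorem eq_bot_or_eq_top_of_mul_eq_smul_mul [IsAlgClosed K] [FiniteDimensional K V]
    {f g : End K V} {ζ : K} (hζ : IsPrimitiveRoot ζ (finrank K V)) (hf : Function.Injective f)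
    (hg : Function.Injective g) (hfg : f * g = ζ • (g * f)) {W : Submodule K V}
    (hfW : ∀ w ∈ W, f w ∈ W) (hgW : ∀ w ∈ W, g w ∈ W) : W = ⊥ ∨ W = ⊤ := by
  refine or_iff_not_imp_left.mpr fun hW ↦ ?_
  obtain ⟨μ, x, hxW, hx⟩ := exists_hasEigenvector_mem_of_mapsTo hW hfW
  have hli := linearIndependent_pow_apply_of_mul_eq_smul_mul hζ hfg hg hx
    (hx.eigenvalue_ne_zero_of_injective hf)
  rw [eq_top_iff, ← hli.span_eq_top_of_card_eq_finrank' (Fintype.card_fin _), Submodule.span_le]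
  rintro _ ⟨j, rfl⟩
  simp only [SetLike.mem_coe, coe_pow]
  exact Set.MapsTo.iterate (fun w hw ↦ hgW w hw) j hxW

end Module.End

/-- Let `ζ` be a primitive `r`-th root of unity and `A`, `B` invertible
`r × r` complex matrices with `A·B = ζ·(B·A)`.  Then the pair `(A, B)` acts irreducibly
on `ℂ^r`: any subspace invariant under both is `⊥` or `⊤`. -/
theorem stmt_4 (r : ℕ) (hr : 1 ≤ r) (ζ : ℂ) (hζr : ζ ^ r = 1)
    (hζprim : ∀ k : ℕ, 1 ≤ k → k < r → ζ ^ k ≠ 1)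
    (A B : Matrix (Fin r) (Fin r) ℂ) (hA : IsUnit A) (hB : IsUnit B)
    (hcomm : A * B = ζ • (B * A)) :
    ∀ W : Submodule ℂ (Fin r → ℂ),
      (∀ w ∈ W, A.mulVec w ∈ W) → (∀ w ∈ W, B.mulVec w ∈ W) → W = ⊥ ∨ W = ⊤ := by
  intro W hAW hBW
  have hζ : IsPrimitiveRoot ζ (Module.finrank ℂ (Fin r → ℂ)) := by
    rw [Module.finrank_fin_fun]
    exact .mk_of_lt ζ hr hζr hζprim
  refine Module.End.eq_bot_or_eq_top_of_mul_eq_smul_mul (f := toLinAlgEquiv' A)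
    (g := toLinAlgEquiv' B) hζ (mulVec_injective_iff_isUnit.mpr hA)
    (mulVec_injective_iff_isUnit.mpr hB) ?_ hAW hBW
  rw [← map_mul, ← map_mul, hcomm, map_smul]
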